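/- arXiv:2506.04927 — 2 statements merged into one kernel-verified Lean document; each statement's English description precedes it below -/
import Mathlib

section
/- Let θ : ℝ → ℝ be continuous, e : [0,T] → ℝ integrable with ē = 0, ε > 0 and λ ∈ (0,1]. Then every solution u of the periodic problem (φ_{p(t)}(u'(t)))' + λθ(u(t))u'(t) − λε u(t) = λ e(t) on [0,T], u(0) − u(T) = 0 = u'(0) − u'(T), satisfies: (i) ū = 0; (ii) ‖u'‖_{L^{p_-}} ≤ R₁, where R₁ is the unique positive root of the equation x^{p_-} − ‖e‖_{L¹} T^{(p_- − 1)/p_-} x − T = 0; and (iii) ‖u‖_∞ ≤ T^{(p_- − 1)/p_-} R₁. -/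
open Set MeasureTheory

/-- `φ_q(x) = |x|^{q-2} x` (with `φ_q(0) = 0`, automatic since `0 ^ y * 0 = 0`). -/
noncomputable def phi (q x : ℝ) : ℝ := |x| ^ (q - 2) * x

/-- sup-norm of `v` on `[0,T]`. -/
noncomputable def supNorm (T : ℝ) (v : ℝ → ℝ) : ℝ := sSup ((fun t => |v t|) '' Set.Icc 0 T)

/-- mean value `v̄ = (1/T) ∫₀ᵀ v`. -/
noncomputable def meanVal (T : ℝ) (v : ℝ → ℝ) : ℝ := (1 / T) * ∫ t in (0:ℝ)..T, v t

/-- `v` (with derivative `v'`) is C¹ on `[0,T]`. -/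
def IsC1On (T : ℝ) (v v' : ℝ → ℝ) : Prop :=
  (∀ t ∈ Set.Icc 0 T, HasDerivWithinAt v (v' t) (Set.Icc 0 T) t) ∧
    ContinuousOn v' (Set.Icc 0 T)

/-- solution of the periodic problem `(φ_{p(t)}(u'))' = F(t)` a.e. on `[0,T]`:
`u` is C¹, satisfies the periodic boundary conditions, and
`w(t) = φ_{p(t)}(u'(t))` is absolutely continuous with a.e. derivative the integrable `F`. -/
def IsAESol (T : ℝ) (p F u u' : ℝ → ℝ) : Prop :=
  IsC1On T u u' ∧ u 0 = u T ∧ u' 0 = u' T ∧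
    MeasureTheory.IntegrableOn F (Set.Icc 0 T) ∧
    ∀ t ∈ Set.Icc 0 T,
      phi (p t) (u' t) = phi (p 0) (u' 0) + ∫ s in (0:ℝ)..t, F s

/-! Integrating the equation over a period kills `(φ_p(u'))'` and the exact derivative
`θ(u) u'`, and `e` has mean zero, so `ε ∫ u = 0`. Multiplying by `u` and integrating by parts
(the primitive of the right-hand side is absolutely continuous) gives
`∫ |u'|^{p(t)} = -λ ∫ e u - λ ε ∫ u² ≤ ‖e‖₁ ‖u‖_∞`, the `θ`-term vanishing for the same reason.
As `u` has mean zero it vanishes somewhere, so `‖u‖_∞ ≤ ‖u'‖₁ ≤ T^{(p₋-1)/p₋} ‖u'‖_{p₋}` by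
Hölder, while `∫ |u'|^{p₋} ≤ ∫ |u'|^{p(t)} + T`. Hence `X = ‖u'‖_{p₋}` satisfies
`X^{p₋} ≤ ‖e‖₁ T^{(p₋-1)/p₋} X + T`, which forces `X ≤ R₁`. -/

open intervalIntegral
open scoped Interval

lemma mul_phi_self {q : ℝ} (hq : q ≠ 0) (x : ℝ) : x * phi q x = |x| ^ q := by
  rcases eq_or_ne x 0 with rfl | hx
  · simp [phi, Real.zero_rpow hq]
  · calc x * phi q x = |x| ^ (q - 2) * |x| ^ 2 := by rw [phi, sq_abs]; ring
      _ = |x| ^ q := by rw [← Real.rpow_add_natCast (abs_ne_zero.2 hx)]; norm_num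

lemma rpow_le_rpow_add_one {x a b : ℝ} (hx : 0 ≤ x) (ha : 0 ≤ a) (hab : a ≤ b) :
    x ^ a ≤ x ^ b + 1 := by
  rcases le_total x 1 with hx1 | hx1
  · linarith [Real.rpow_le_one hx hx1 ha, Real.rpow_nonneg hx b]
  · linarith [Real.rpow_le_rpow_of_exponent_le hx1 hab]

lemma le_of_rpow_le_mul_add {q c d R X : ℝ} (hq : 1 < q) (hd : 0 ≤ d) (hR : 0 < R)
    (hroot : R ^ q = c * R + d) (hX : X ^ q ≤ c * X + d) : X ≤ R := by
  -- with `r = R / X < 1`: `R^q = r^q X^q < r X^q ≤ c R + r d ≤ c R + d = R^q`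
  by_contra! hRX
  have hX0 : 0 < X := hR.trans hRX
  set r := R / X
  have hr0 : 0 < r := div_pos hR hX0
  have hr1 : r < 1 := (div_lt_one hX0).2 hRX
  have hrX : R = r * X := (div_mul_cancel₀ R hX0.ne').symm
  have hlt : R ^ q < r * X ^ q := by
    rw [hrX, Real.mul_rpow hr0.le hX0.le]
    refine mul_lt_mul_of_pos_right ?_ (Real.rpow_pos_of_pos hX0 q)
    simpa using Real.rpow_lt_rpow_of_exponent_gt hr0 hr1 hq
  have hle : r * X ^ q ≤ c * R + r * d := by
    rw [hrX]; nlinarith [mul_le_mul_of_nonneg_left hX hr0.le]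
  nlinarith [mul_le_of_le_one_left hd hr1.le]

lemma integral_abs_le_integral_rpow_mul {T q : ℝ} {f : ℝ → ℝ} (hT : 0 ≤ T) (hq : 1 < q)
    (hf : ContinuousOn f (Icc 0 T)) :
    ∫ t in (0:ℝ)..T, |f t| ≤ (∫ t in (0:ℝ)..T, |f t| ^ q) ^ (1 / q) * T ^ ((q - 1) / q) := by
  obtain ⟨C, hC⟩ := isCompact_Icc.exists_bound_of_continuousOn hf
  have hfLp : MemLp (fun t => |f t|) (ENNReal.ofReal q) (volume.restrict (Ioc 0 T)) := by
    refine MemLp.of_bound ((hf.mono Ioc_subset_Icc_self).abs.aestronglyMeasurable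
      measurableSet_Ioc) C ?_
    filter_upwards [ae_restrict_mem measurableSet_Ioc] with t ht
    simpa using hC t (Ioc_subset_Icc_self ht)
  have hHolder := integral_mul_le_Lp_mul_Lq_of_nonneg (Real.HolderConjugate.conjExponent hq)
    (ae_of_all _ fun t => abs_nonneg (f t)) (ae_of_all _ fun _ => zero_le_one) hfLp
    (memLp_const (1 : ℝ))
  simp only [mul_one, Real.one_rpow, setIntegral_const, Real.conjExponent,
    Real.volume_real_Ioc_of_le hT, sub_zero, smul_eq_mul] at hHolder
  simpa only [integral_of_le hT, one_div, inv_div] using hHolder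

lemma integral_rpow_le_integral_rpow_add {T q : ℝ} {f p : ℝ → ℝ} (hT : 0 ≤ T)
    (hf : ContinuousOn f (Icc 0 T)) (hp : ContinuousOn p (Icc 0 T)) (hq : 0 < q)
    (hqp : ∀ t ∈ Icc 0 T, q ≤ p t) :
    ∫ t in (0:ℝ)..T, |f t| ^ q ≤ (∫ t in (0:ℝ)..T, |f t| ^ p t) + T := by
  have hfq : IntervalIntegrable (fun t => |f t| ^ q) volume 0 T :=
    (hf.abs.rpow_const fun _ _ => Or.inr hq.le).intervalIntegrable_of_Icc hT
  have hfp : IntervalIntegrable (fun t => |f t| ^ p t) volume 0 T :=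
    (hf.abs.rpow hp fun t ht => Or.inr (hq.trans_le (hqp t ht))).intervalIntegrable_of_Icc hT
  calc ∫ t in (0:ℝ)..T, |f t| ^ q ≤ ∫ t in (0:ℝ)..T, (|f t| ^ p t + 1) :=
        integral_mono_on hT hfq (hfp.add intervalIntegrable_const) fun t ht =>
          rpow_le_rpow_add_one (abs_nonneg _) hq.le (hqp t ht)
    _ = (∫ t in (0:ℝ)..T, |f t| ^ p t) + T := by
        rw [integral_add hfp intervalIntegrable_const]; simp

section SupNorm

variable {T : ℝ} {v : ℝ → ℝ}

lemma abs_le_supNorm (hv : ContinuousOn v (Icc 0 T)) {t : ℝ} (ht : t ∈ Icc 0 T) :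
    |v t| ≤ supNorm T v :=
  le_csSup (isCompact_Icc.image_of_continuousOn hv.abs).bddAbove (mem_image_of_mem _ ht)

lemma supNorm_le (hT : 0 ≤ T) {M : ℝ} (h : ∀ t ∈ Icc 0 T, |v t| ≤ M) : supNorm T v ≤ M :=
  csSup_le ((nonempty_Icc.2 hT).image _) (forall_mem_image.2 h)

lemma abs_integral_mul_le_integral_abs_mul_supNorm (hT : 0 ≤ T) {e : ℝ → ℝ}
    (he : IntegrableOn e (Icc 0 T)) (hv : ContinuousOn v (Icc 0 T)) :
    |∫ t in (0:ℝ)..T, e t * v t| ≤ (∫ t in (0:ℝ)..T, |e t|) * supNorm T v := by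
  have he' : IntervalIntegrable e volume 0 T :=
    (intervalIntegrable_iff_integrableOn_Icc_of_le hT).2 he
  calc |∫ t in (0:ℝ)..T, e t * v t| ≤ ∫ t in (0:ℝ)..T, |e t * v t| :=
        abs_integral_le_integral_abs hT
    _ ≤ ∫ t in (0:ℝ)..T, |e t| * supNorm T v :=
        integral_mono_on hT (he'.mul_continuousOn (uIcc_of_le hT ▸ hv)).abs
          (he'.abs.mul_const _) fun t ht => by
          rw [abs_mul]; exact mul_le_mul_of_nonneg_left (abs_le_supNorm hv ht) (abs_nonneg _)
    _ = (∫ t in (0:ℝ)..T, |e t|) * supNorm T v := integral_mul_const _ _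

end SupNorm

namespace IsC1On

variable {T : ℝ} {u u' : ℝ → ℝ}

lemma continuousOn (hu : IsC1On T u u') : ContinuousOn u (Icc 0 T) :=
  fun t ht => (hu.1 t ht).continuousWithinAt

lemma hasDerivAt (hu : IsC1On T u u') {t : ℝ} (ht : t ∈ Ioo 0 T) : HasDerivAt u (u' t) t :=
  (hu.1 t (Ioo_subset_Icc_self ht)).hasDerivAt (Icc_mem_nhds ht.1 ht.2)

lemma hasDerivWithinAt_Ioi (hu : IsC1On T u u') {a b : ℝ} (ha : a ∈ Icc 0 T) (hb : b ∈ Icc 0 T)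
    {t : ℝ} (ht : t ∈ Ioo (min a b) (max a b)) : HasDerivWithinAt u (u' t) (Ioi t) t :=
  (hu.hasDerivAt ⟨(le_min ha.1 hb.1).trans_lt ht.1,
    ht.2.trans_le (max_le ha.2 hb.2)⟩).hasDerivWithinAt

lemma integral_eq_sub (hu : IsC1On T u u') {a b : ℝ} (ha : a ∈ Icc 0 T) (hb : b ∈ Icc 0 T) :
    ∫ t in a..b, u' t = u b - u a :=
  integral_eq_sub_of_hasDeriv_right (hu.continuousOn.mono (uIcc_subset_Icc ha hb))
    (fun _ => hu.hasDerivWithinAt_Ioi ha hb)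
    ((hu.2.mono (uIcc_subset_Icc ha hb)).intervalIntegrable)

lemma integral_comp_mul_eq_zero (hT : 0 ≤ T) (hu : IsC1On T u u') (hper : u 0 = u T)
    {g : ℝ → ℝ} (hg : Continuous g) : ∫ t in (0:ℝ)..T, g (u t) * u' t = 0 := by
  have h0 : (0:ℝ) ∈ Icc 0 T := left_mem_Icc.2 hT
  have hT' : T ∈ Icc 0 T := right_mem_Icc.2 hT
  simpa [hper] using integral_comp_mul_deriv'' (hu.continuousOn.mono (uIcc_subset_Icc h0 hT'))
    (fun _ => hu.hasDerivWithinAt_Ioi h0 hT') (hu.2.mono (uIcc_subset_Icc h0 hT'))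
    hg.continuousOn

lemma abs_le_integral_abs_of_eq_zero (hT : 0 ≤ T) (hu : IsC1On T u u') {c : ℝ}
    (hc : c ∈ Icc 0 T) (hc0 : u c = 0) {t : ℝ} (ht : t ∈ Icc 0 T) :
    |u t| ≤ ∫ s in (0:ℝ)..T, |u' s| :=
  calc |u t| = ‖∫ s in c..t, u' s‖ := by
        rw [hu.integral_eq_sub hc ht, hc0, sub_zero, Real.norm_eq_abs]
    _ ≤ ∫ s in Ι c t, ‖u' s‖ := norm_integral_le_integral_norm_uIoc
    _ ≤ ∫ s in Ioc 0 T, ‖u' s‖ :=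
        setIntegral_mono_set (hu.2.norm.integrableOn_Icc.mono_set Ioc_subset_Icc_self)
          (ae_of_all _ fun _ => norm_nonneg _)
          (Ioc_subset_Ioc (le_min hc.1 ht.1) (max_le hc.2 ht.2)).eventuallyLE
    _ = ∫ s in (0:ℝ)..T, |u' s| := by simp [integral_of_le hT]

lemma supNorm_le_integral_abs (hT : 0 < T) (hu : IsC1On T u u')
    (hmean : ∫ t in (0:ℝ)..T, u t = 0) : supNorm T u ≤ ∫ s in (0:ℝ)..T, |u' s| := by
  obtain ⟨c, hc, hc0⟩ := exists_eq_interval_average hT.ne (uIcc_of_le hT.le ▸ hu.continuousOn)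
  rw [interval_average_eq_div, hmean, zero_div] at hc0
  have hc' : c ∈ Icc 0 T := by
    rw [uIoo_of_le hT.le] at hc; exact Ioo_subset_Icc_self hc
  exact supNorm_le hT.le fun t ht => hu.abs_le_integral_abs_of_eq_zero hT.le hc' hc0 ht

lemma absolutelyContinuousOnInterval (hT : 0 ≤ T) (hu : IsC1On T u u') :
    AbsolutelyContinuousOnInterval u 0 T := by
  obtain ⟨C, hC⟩ := isCompact_Icc.exists_bound_of_continuousOn hu.2
  refine LipschitzOnWith.absolutelyContinuousOnInterval (K := C.toNNReal) ?_
  rw [uIcc_of_le hT]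
  refine (convex_Icc 0 T).lipschitzOnWith_of_nnnorm_hasDerivWithin_le hu.1 fun t ht => ?_
  rw [← NNReal.coe_le_coe, coe_nnnorm, Real.coe_toNNReal']
  exact (hC t ht).trans (le_max_left _ _)

lemma integral_mul_eq_sub_integral_mul_primitive (hT : 0 ≤ T) (hu : IsC1On T u u')
    {F : ℝ → ℝ} (hF : IntervalIntegrable F volume 0 T) :
    ∫ t in (0:ℝ)..T, F t * u t =
      u T * (∫ t in (0:ℝ)..T, F t) - ∫ t in (0:ℝ)..T, u' t * ∫ s in (0:ℝ)..t, F s := by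
  have hIBP := (hu.absolutelyContinuousOnInterval hT).integral_mul_deriv_eq_deriv_mul
    (hF.absolutelyContinuousOnInterval_intervalIntegral left_mem_uIcc)
  have hF' : ∫ t in (0:ℝ)..T, u t * deriv (fun x => ∫ s in (0:ℝ)..x, F s) t =
      ∫ t in (0:ℝ)..T, F t * u t := by
    refine integral_congr_ae ?_
    filter_upwards [hF.ae_hasDerivAt_integral] with t ht htT
    rw [(ht (uIoc_subset_uIcc htT) 0 left_mem_uIcc).deriv, mul_comm]
  have hu' : ∫ t in (0:ℝ)..T, deriv u t * (∫ s in (0:ℝ)..t, F s) =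
      ∫ t in (0:ℝ)..T, u' t * ∫ s in (0:ℝ)..t, F s := by
    refine integral_congr_ae ?_
    filter_upwards [(ae_iff.2 (by simp) : ∀ᵐ t : ℝ, t ≠ T)] with t htT ht
    rw [uIoc_of_le hT] at ht
    rw [(hu.hasDerivAt ⟨ht.1, lt_of_le_of_ne ht.2 htT⟩).deriv]
  rw [← hF', hIBP, hu', integral_same, mul_zero, sub_zero]

end IsC1On

namespace IsAESol

variable {T : ℝ} {p F u u' : ℝ → ℝ}

lemma intervalIntegrable (hu : IsAESol T p F u u') {a b : ℝ} (ha : a ∈ Icc 0 T)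
    (hb : b ∈ Icc 0 T) : IntervalIntegrable F volume a b :=
  (hu.2.2.2.1.mono_set (uIcc_subset_Icc ha hb)).intervalIntegrable

lemma integral_eq_zero (hT : 0 ≤ T) (hu : IsAESol T p F u u') (hpT : p 0 = p T) :
    ∫ t in (0:ℝ)..T, F t = 0 := by
  have h := hu.2.2.2.2 T (right_mem_Icc.2 hT)
  rw [← hpT, ← hu.2.2.1] at h
  linarith

lemma integral_mul_eq_neg_integral_rpow (hT : 0 ≤ T) (hu : IsAESol T p F u u')
    (hpT : p 0 = p T) (hp0 : ∀ t ∈ Icc 0 T, p t ≠ 0) :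
    ∫ t in (0:ℝ)..T, F t * u t = -∫ t in (0:ℝ)..T, |u' t| ^ p t := by
  have h0 : (0:ℝ) ∈ Icc 0 T := left_mem_Icc.2 hT
  have hT' : T ∈ Icc 0 T := right_mem_Icc.2 hT
  have hW : ContinuousOn (fun t => ∫ s in (0:ℝ)..t, F s) (Icc 0 T) := by
    simpa only [uIcc_of_le hT] using
      continuousOn_primitive_interval (hu.2.2.2.1.mono_set (uIcc_subset_Icc h0 hT'))
  have hpow : ∫ t in (0:ℝ)..T, |u' t| ^ p t =
      ∫ t in (0:ℝ)..T, (u' t * ∫ s in (0:ℝ)..t, F s) + phi (p 0) (u' 0) * u' t := by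
    refine integral_congr fun t ht => ?_
    rw [uIcc_of_le hT] at ht
    rw [← mul_phi_self (hp0 t ht), hu.2.2.2.2 t ht]
    ring
  rw [hu.1.integral_mul_eq_sub_integral_mul_primitive hT (hu.intervalIntegrable h0 hT'),
    hu.integral_eq_zero hT hpT, hpow,
    integral_add ((hu.1.2.fun_mul hW).intervalIntegrable_of_Icc hT)
      ((hu.1.2.intervalIntegrable_of_Icc hT).const_mul _),
    intervalIntegral.integral_const_mul, hu.1.integral_eq_sub h0 hT', hu.2.1]
  ring

end IsAESol

section PeriodicProblem

variable {T ε lam : ℝ} {p θ e u u' : ℝ → ℝ}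

lemma integral_eq_zero_of_isAESol (hT : 0 ≤ T) (hpT : p 0 = p T) (hθ : Continuous θ)
    (he : IntegrableOn e (Icc 0 T)) (he0 : ∫ t in (0:ℝ)..T, e t = 0) (hlam : lam ≠ 0)
    (hε : ε ≠ 0) (hu : IsAESol T p (fun t => lam * (e t - θ (u t) * u' t + ε * u t)) u u') :
    ∫ t in (0:ℝ)..T, u t = 0 := by
  have he' : IntervalIntegrable e volume 0 T :=
    (intervalIntegrable_iff_integrableOn_Icc_of_le hT).2 he
  have hθu : IntervalIntegrable (fun t => θ (u t) * u' t) volume 0 T :=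
    ((hθ.comp_continuousOn hu.1.continuousOn).mul hu.1.2).intervalIntegrable_of_Icc hT
  have hF := hu.integral_eq_zero hT hpT
  rw [intervalIntegral.integral_const_mul, integral_add (he'.sub hθu)
    ((hu.1.continuousOn.intervalIntegrable_of_Icc hT).const_mul ε), integral_sub he' hθu,
    intervalIntegral.integral_const_mul, he0, hu.1.integral_comp_mul_eq_zero hT hu.2.1 hθ] at hF
  simpa [hlam, hε] using hF

lemma integral_rpow_le_of_isAESol (hT : 0 ≤ T) (hpT : p 0 = p T)
    (hp0 : ∀ t ∈ Icc 0 T, p t ≠ 0) (hθ : Continuous θ) (he : IntegrableOn e (Icc 0 T))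
    (hlam0 : 0 ≤ lam) (hlam1 : lam ≤ 1) (hε : 0 ≤ ε)
    (hu : IsAESol T p (fun t => lam * (e t - θ (u t) * u' t + ε * u t)) u u') :
    ∫ t in (0:ℝ)..T, |u' t| ^ p t ≤ (∫ t in (0:ℝ)..T, |e t|) * supNorm T u := by
  have huc := hu.1.continuousOn
  have heu : IntervalIntegrable (fun t => e t * u t) volume 0 T :=
    ((intervalIntegrable_iff_integrableOn_Icc_of_le hT).2 he).mul_continuousOn
      (uIcc_of_le hT ▸ huc)
  have hθu : IntervalIntegrable (fun t => θ (u t) * u t * u' t) volume 0 T :=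
    (((hθ.comp_continuousOn huc).mul huc).mul hu.1.2).intervalIntegrable_of_Icc hT
  have huu : IntervalIntegrable (fun t => u t * u t) volume 0 T :=
    (huc.mul huc).intervalIntegrable_of_Icc hT
  have hsplit : ∫ t in (0:ℝ)..T, lam * (e t - θ (u t) * u' t + ε * u t) * u t =
      lam * ((∫ t in (0:ℝ)..T, e t * u t) - (∫ t in (0:ℝ)..T, θ (u t) * u t * u' t)
        + ε * ∫ t in (0:ℝ)..T, u t * u t) := by
    rw [← integral_sub heu hθu, ← intervalIntegral.integral_const_mul ε,
      ← integral_add (heu.sub hθu) (huu.const_mul ε), ← intervalIntegral.integral_const_mul]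
    exact integral_congr fun t _ => by ring
  have hsubst : ∫ t in (0:ℝ)..T, θ (u t) * u t * u' t = 0 :=
    hu.1.integral_comp_mul_eq_zero hT hu.2.1 (g := fun x => θ x * x) (hθ.mul continuous_id)
  have huu0 : 0 ≤ ∫ t in (0:ℝ)..T, u t * u t := integral_nonneg hT fun t _ => mul_self_nonneg _
  have heu_le := abs_integral_mul_le_integral_abs_mul_supNorm hT he huc
  rw [hu.integral_mul_eq_neg_integral_rpow hT hpT hp0, hsubst] at hsplit
  nlinarith [mul_le_mul_of_nonneg_left ((neg_le_abs _).trans heu_le) hlam0,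
    mul_le_of_le_one_left ((abs_nonneg _).trans heu_le) hlam1,
    mul_nonneg hlam0 (mul_nonneg hε huu0)]

end PeriodicProblem

theorem stmt1 (T : ℝ) (hT : 0 < T) (p : ℝ → ℝ)
    (hp : ContinuousOn p (Set.Icc 0 T)) (hp1 : ∀ t ∈ Set.Icc 0 T, 1 < p t)
    (hpT : p 0 = p T)
    (pm : ℝ) (hpm : pm = sInf (p '' Set.Icc 0 T))
    (θ : ℝ → ℝ) (hθ : Continuous θ)
    (e : ℝ → ℝ) (he : MeasureTheory.IntegrableOn e (Set.Icc 0 T))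
    (hemean : meanVal T e = 0)
    (ε lam : ℝ) (hε : 0 < ε) (hlam0 : 0 < lam) (hlam1 : lam ≤ 1)
    (R₁ : ℝ) (hR₁pos : 0 < R₁)
    (hR₁root : R₁ ^ pm - (∫ t in (0:ℝ)..T, |e t|) * T ^ ((pm - 1) / pm) * R₁ - T = 0)
    (u u' : ℝ → ℝ)
    (hu : IsAESol T p (fun t => lam * (e t - θ (u t) * u' t + ε * u t)) u u') :
    meanVal T u = 0 ∧
      (∫ t in (0:ℝ)..T, |u' t| ^ pm) ^ (1 / pm) ≤ R₁ ∧
      supNorm T u ≤ T ^ ((pm - 1) / pm) * R₁ := by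
  obtain ⟨t₀, ht₀, hpm_eq, hpm_le⟩ :=
    isCompact_Icc.exists_sInf_image_eq_and_le (nonempty_Icc.2 hT.le) hp
  rw [← hpm] at hpm_eq
  rw [← hpm_eq] at hpm_le
  have hpm1 : 1 < pm := hpm_eq ▸ hp1 t₀ ht₀
  have hp0 : ∀ t ∈ Icc 0 T, p t ≠ 0 := fun t ht => (zero_lt_one.trans (hp1 t ht)).ne'
  have he0 : ∫ t in (0:ℝ)..T, e t = 0 := by simpa [meanVal, hT.ne'] using hemean
  have hmean : ∫ t in (0:ℝ)..T, u t = 0 :=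
    integral_eq_zero_of_isAESol hT.le hpT hθ he he0 hlam0.ne' hε.ne' hu
  set X := (∫ t in (0:ℝ)..T, |u' t| ^ pm) ^ (1 / pm) with hX
  have hsup : supNorm T u ≤ T ^ ((pm - 1) / pm) * X :=
    (hu.1.supNorm_le_integral_abs hT hmean).trans
      ((integral_abs_le_integral_rpow_mul hT.le hpm1 hu.1.2).trans_eq (mul_comm _ _))
  have hXpow : X ^ pm = ∫ t in (0:ℝ)..T, |u' t| ^ pm := by
    rw [hX, ← Real.rpow_mul (integral_nonneg hT.le fun t _ => by positivity),
      one_div_mul_cancel (by positivity), Real.rpow_one]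
  have hX_le : X ^ pm ≤ (∫ t in (0:ℝ)..T, |e t|) * T ^ ((pm - 1) / pm) * X + T :=
    calc X ^ pm ≤ (∫ t in (0:ℝ)..T, |u' t| ^ p t) + T :=
          hXpow ▸ integral_rpow_le_integral_rpow_add hT.le hu.1.2 hp (by linarith) hpm_le
      _ ≤ (∫ t in (0:ℝ)..T, |e t|) * supNorm T u + T := by
          gcongr
          exact integral_rpow_le_of_isAESol hT.le hpT hp0 hθ he hlam0.le hlam1 hε.le hu
      _ ≤ (∫ t in (0:ℝ)..T, |e t|) * (T ^ ((pm - 1) / pm) * X) + T := by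
          gcongr
          exact integral_nonneg hT.le fun t _ => abs_nonneg _
      _ = _ := by ring
  have hXR : X ≤ R₁ := le_of_rpow_le_mul_add hpm1 hT.le hR₁pos (by linarith) hX_le
  exact ⟨by simp [meanVal, hmean], hXR, hsup.trans (by gcongr)⟩
end

section
/- Let f : [0,∞) → ℝ, g : (0,∞) → ℝ, h : [0,T] → ℝ be continuous, let α be a lower solution and β an upper solution of problem (P) with α(t) ≤ β(t) for all t. Define γ(t,x) = β(t) if x > β(t), γ(t,x) = x if α(t) ≤ x ≤ β(t), γ(t,x) = α(t) if x < α(t), and ℓ*(t,x,y) = h(t) − g(γ(t,x)) − f(γ(t,x))y + x − γ(t,x). Then every C¹ function u : [0,T] → ℝ with t ↦ φ_{p(t)}(u'(t)) of class C¹ satisfying (φ_{p(t)}(u'(t)))' = ℓ*(t, u(t), u'(t)) on [0,T] together with u(0) − u(T) = 0 = u'(0) − u'(T) satisfies α(t) ≤ u(t) ≤ β(t) for all t ∈ [0,T] (and hence is a solution of (P)). -/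
open Set MeasureTheory

/-- (classical, positive) solution of problem (P):
`(φ_{p(t)}(u'))' + f(u)u' + g(u) = h(t)` on `[0,T]`, `u(0)-u(T) = 0 = u'(0)-u'(T)`. -/
def IsSolP (T : ℝ) (p f g h u : ℝ → ℝ) : Prop :=
  ∃ u' w' : ℝ → ℝ,
    IsC1On T u u' ∧ (∀ t ∈ Set.Icc 0 T, 0 < u t) ∧
    IsC1On T (fun t => phi (p t) (u' t)) w' ∧
    u 0 = u T ∧ u' 0 = u' T ∧
    ∀ t ∈ Set.Icc 0 T, w' t + f (u t) * u' t + g (u t) = h t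

/-- lower solution of problem (P). -/
def IsLowerSol (T : ℝ) (p f g h α : ℝ → ℝ) : Prop :=
  ∃ α' w' : ℝ → ℝ,
    IsC1On T α α' ∧ (∀ t ∈ Set.Icc 0 T, 0 < α t) ∧
    IsC1On T (fun t => phi (p t) (α' t)) w' ∧
    α 0 = α T ∧ α' T ≤ α' 0 ∧
    ∀ t ∈ Set.Icc 0 T, h t ≤ w' t + f (α t) * α' t + g (α t)

/-- upper solution of problem (P). -/
def IsUpperSol (T : ℝ) (p f g h β : ℝ → ℝ) : Prop :=
  ∃ β' w' : ℝ → ℝ,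
    IsC1On T β β' ∧ (∀ t ∈ Set.Icc 0 T, 0 < β t) ∧
    IsC1On T (fun t => phi (p t) (β' t)) w' ∧
    β 0 = β T ∧ β' 0 ≤ β' T ∧
    ∀ t ∈ Set.Icc 0 T, w' t + f (β t) * β' t + g (β t) ≤ h t

/-!
Let `v = u - β`. Where `u > β` the truncation gives `γ(t, u) = β`, so subtracting the
upper-solution inequality from the equation for `u` yields
`(φ(u') - φ(β'))' ≥ v - f(β) v'`. By periodicity and `β'(0) ≤ β'(T)`, a positive maximum of `v`
can be taken at some `t₀ ∈ (0, T]` with `v'(t₀) = 0`. There the right-hand side equals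
`v(t₀) > 0`, so `φ(u') - φ(β')` is strictly increasing just left of `t₀` and vanishes at `t₀`.
Since `φ` is strictly increasing, `v' < 0` there, so `v` is strictly decreasing up to `t₀`,
contradicting maximality. The lower bound `α ≤ u` is the same argument for `α - u`.
-/

open Filter Topology

lemma phi_of_nonneg {q x : ℝ} (hq : 1 < q) (hx : 0 ≤ x) : phi q x = x ^ (q - 1) := by
  rcases hx.eq_or_lt with rfl | hx
  · simp [phi, Real.zero_rpow (by linarith : q - 1 ≠ 0)]
  · rw [phi, abs_of_pos hx, show q - 1 = q - 2 + 1 by ring, Real.rpow_add_one hx.ne']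

lemma phi_neg (q x : ℝ) : phi q (-x) = -phi q x := by simp [phi]

lemma phi_strictMono {q : ℝ} (hq : 1 < q) : StrictMono (phi q) :=
  strictMono_of_odd_strictMonoOn_nonneg (phi_neg q) fun x hx y hy hxy => by
    rw [phi_of_nonneg hq hx, phi_of_nonneg hq hy]
    exact Real.rpow_lt_rpow hx hxy (by linarith)

lemma IsC1On.continuousOn_s10 {T : ℝ} {v v' : ℝ → ℝ} (hv : IsC1On T v v') :
    ContinuousOn v (Icc 0 T) :=
  fun t ht => (hv.1 t ht).continuousWithinAt

lemma IsMaxOn.hasDerivWithinAt_Icc_left_nonpos {v : ℝ → ℝ} {a b d : ℝ} (hab : a < b)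
    (hmax : IsMaxOn v (Icc a b) a) (hd : HasDerivWithinAt v d (Icc a b) a) : d ≤ 0 := by
  have hcone : b - a ∈ posTangentConeAt (Icc a b) a := by
    apply mem_posTangentConeAt_of_segment_subset
    rw [add_sub_cancel, segment_eq_Icc hab.le]
  have := hmax.localize.hasFDerivWithinAt_nonpos hd.hasFDerivWithinAt hcone
  simp only [ContinuousLinearMap.toSpanSingleton_apply, smul_eq_mul] at this
  nlinarith

lemma IsMaxOn.hasDerivWithinAt_Icc_right_nonneg {v : ℝ → ℝ} {a b d : ℝ} (hab : a < b)
    (hmax : IsMaxOn v (Icc a b) b) (hd : HasDerivWithinAt v d (Icc a b) b) : 0 ≤ d := by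
  have hcone : a - b ∈ posTangentConeAt (Icc a b) b := by
    apply mem_posTangentConeAt_of_segment_subset
    rw [add_sub_cancel, segment_symm, segment_eq_Icc hab.le]
  have := hmax.localize.hasFDerivWithinAt_nonpos hd.hasFDerivWithinAt hcone
  simp only [ContinuousLinearMap.toSpanSingleton_apply, smul_eq_mul] at this
  nlinarith

lemma exists_isMaxOn_deriv_eq_zero_of_periodic {a b : ℝ} (hab : a < b) {v v' : ℝ → ℝ}
    (hv : ∀ t ∈ Icc a b, HasDerivWithinAt v (v' t) (Icc a b) t)
    (hper : v a = v b) (hper' : v' b ≤ v' a) :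
    ∃ t₀ ∈ Ioc a b, IsMaxOn v (Icc a b) t₀ ∧ v' t₀ = 0 := by
  have hvc : ContinuousOn v (Icc a b) := fun t ht => (hv t ht).continuousWithinAt
  obtain ⟨t₁, ht₁, hmax⟩ := isCompact_Icc.exists_isMaxOn (nonempty_Icc.2 hab.le) hvc
  by_cases hint : t₁ ∈ Ioo a b
  · have hnhds : Icc a b ∈ 𝓝 t₁ := Icc_mem_nhds hint.1 hint.2
    exact ⟨t₁, Ioo_subset_Ioc_self hint, hmax,
      (hmax.isLocalMax hnhds).hasDerivAt_eq_zero ((hv t₁ ht₁).hasDerivAt hnhds)⟩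
  -- A maximum at an endpoint is attained at both endpoints, since `v a = v b`.
  have hvt₁ : v t₁ = v a := by
    have hend : t₁ = a ∨ t₁ = b := by
      by_contra! hne
      exact hint ⟨ht₁.1.lt_of_ne hne.1.symm, ht₁.2.lt_of_ne hne.2⟩
    rcases hend with rfl | rfl
    exacts [rfl, hper.symm]
  have hmaxa : IsMaxOn v (Icc a b) a := fun t ht => (hmax ht).trans hvt₁.le
  have hmaxb : IsMaxOn v (Icc a b) b := fun t ht => (hmax ht).trans (hvt₁.trans hper).le
  have ha := hmaxa.hasDerivWithinAt_Icc_left_nonpos hab (hv a (left_mem_Icc.2 hab.le))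
  have hb := hmaxb.hasDerivWithinAt_Icc_right_nonneg hab (hv b (right_mem_Icc.2 hab.le))
  exact ⟨b, right_mem_Ioc.2 hab, hmaxb, by linarith⟩

theorem nonpos_of_periodic_of_eventually_deriv_pos {a b : ℝ} (hab : a < b) {v v' m m' : ℝ → ℝ}
    (hv : ∀ t ∈ Icc a b, HasDerivWithinAt v (v' t) (Icc a b) t)
    (hm : ∀ t ∈ Icc a b, HasDerivWithinAt m (m' t) (Icc a b) t)
    (hper : v a = v b) (hper' : v' b ≤ v' a)
    (hsign : ∀ t ∈ Icc a b, m t < 0 → v' t < 0) (hzero : ∀ t ∈ Icc a b, v' t = 0 → m t = 0)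
    (hm' : ∀ t ∈ Icc a b, 0 < v t → v' t = 0 → ∀ᶠ s in 𝓝[Icc a b] t, 0 < m' s) :
    ∀ t ∈ Icc a b, v t ≤ 0 := by
  by_contra! ⟨s, hs, hvs⟩
  obtain ⟨t₀, ht₀, hmax, hv't₀⟩ := exists_isMaxOn_deriv_eq_zero_of_periodic hab hv hper hper'
  have ht₀' : t₀ ∈ Icc a b := Ioc_subset_Icc_self ht₀
  have hIcc_mem : Icc a b ∈ 𝓝[<] t₀ :=
    mem_of_superset (Ioo_mem_nhdsLT ht₀.1) (Ioo_subset_Icc_self.trans (Icc_subset_Icc_right ht₀.2))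
  obtain ⟨l, hl, hpos⟩ := (mem_nhdsLT_iff_exists_Ioo_subset (a := t₀)).1 <|
    nhdsWithin_le_of_mem hIcc_mem (hm' t₀ ht₀' (hvs.trans_le (hmax hs)) hv't₀)
  set c := max l a
  have hct₀ : c < t₀ := max_lt hl ht₀.1
  have hsub : Icc c t₀ ⊆ Icc a b := Icc_subset_Icc (le_max_right l a) ht₀.2
  have hderiv {f f' : ℝ → ℝ} (hf : ∀ t ∈ Icc a b, HasDerivWithinAt f (f' t) (Icc a b) t) :
      ContinuousOn f (Icc c t₀) ∧
        ∀ t ∈ interior (Icc c t₀), HasDerivWithinAt f (f' t) (interior (Icc c t₀)) t := by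
    refine ⟨fun t ht => (hf t (hsub ht)).continuousWithinAt.mono hsub, fun t ht => ?_⟩
    exact (hf t (hsub (interior_subset ht))).mono (interior_subset.trans hsub)
  have hm_mono : StrictMonoOn m (Icc c t₀) :=
    strictMonoOn_of_hasDerivWithinAt_pos (convex_Icc c t₀) (hderiv hm).1 (hderiv hm).2
      fun t ht => hpos (Ioo_subset_Ioo_left (le_max_left l a) (by rwa [interior_Icc] at ht))
  have hv_anti : StrictAntiOn v (Icc c t₀) := by
    refine strictAntiOn_of_hasDerivWithinAt_neg (convex_Icc c t₀) (hderiv hv).1 (hderiv hv).2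
      fun t ht => ?_
    rw [interior_Icc] at ht
    refine hsign t (hsub (Ioo_subset_Icc_self ht)) ?_
    rw [← hzero t₀ ht₀' hv't₀]
    exact hm_mono (Ioo_subset_Icc_self ht) (right_mem_Icc.2 hct₀.le) ht.2
  exact (hv_anti (left_mem_Icc.2 hct₀.le) (right_mem_Icc.2 hct₀.le) hct₀).not_ge
    (hmax (hsub (left_mem_Icc.2 hct₀.le)))

theorem le_of_phi_comparison {T : ℝ} (hT : 0 < T) {p x x' y y' wx wy c : ℝ → ℝ}
    (hp : ∀ t ∈ Icc 0 T, 1 < p t) (hx : IsC1On T x x') (hy : IsC1On T y y')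
    (hwx : ∀ t ∈ Icc 0 T, HasDerivWithinAt (fun t => phi (p t) (x' t)) (wx t) (Icc 0 T) t)
    (hwy : ∀ t ∈ Icc 0 T, HasDerivWithinAt (fun t => phi (p t) (y' t)) (wy t) (Icc 0 T) t)
    (hxper : x 0 = x T) (hyper : y 0 = y T) (hper' : x' T - y' T ≤ x' 0 - y' 0)
    (hc : ContinuousOn c (Icc 0 T))
    (hineq : ∀ t ∈ Icc 0 T, y t < x t → x t - y t - c t * (x' t - y' t) ≤ wx t - wy t) :
    ∀ t ∈ Icc 0 T, x t ≤ y t := by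
  have hv : ContinuousOn (fun t => x t - y t) (Icc 0 T) := hx.continuousOn_s10.sub hy.continuousOn_s10
  have hr : ContinuousOn (fun t => x t - y t - c t * (x' t - y' t)) (Icc 0 T) :=
    hv.sub (hc.mul (hx.2.sub hy.2))
  refine fun t ht => sub_nonpos.1 <| nonpos_of_periodic_of_eventually_deriv_pos hT
    (v := fun t => x t - y t) (m := fun t => phi (p t) (x' t) - phi (p t) (y' t))
    (fun t ht => (hx.1 t ht).sub (hy.1 t ht)) (fun t ht => (hwx t ht).sub (hwy t ht))
    (by rw [hxper, hyper]) hper' (fun t ht hm => ?_) (fun t _ hv' => ?_)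
    (fun t₀ ht₀ hv₀ hv'₀ => ?_) t ht
  · rwa [sub_neg, (phi_strictMono (hp t ht)).lt_iff_lt, ← sub_neg] at hm
  · rw [sub_eq_zero.1 hv', sub_self]
  · have hr₀ : 0 < x t₀ - y t₀ - c t₀ * (x' t₀ - y' t₀) := by rwa [hv'₀, mul_zero, sub_zero]
    filter_upwards [(hr t₀ ht₀).eventually (lt_mem_nhds hr₀),
      (hv t₀ ht₀).eventually (lt_mem_nhds hv₀), self_mem_nhdsWithin] with s hrs hvs hs
    exact hrs.trans_le (hineq s hs (sub_pos.1 hvs))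

theorem stmt10_general (T : ℝ) (hT : 0 < T) (p : ℝ → ℝ)
    (hp1 : ∀ t ∈ Set.Icc 0 T, 1 < p t)
    (f g h : ℝ → ℝ)
    (hf : ContinuousOn f (Set.Ici 0))
    (α β : ℝ → ℝ) (hα : IsLowerSol T p f g h α) (hβ : IsUpperSol T p f g h β)
    (hαβ : ∀ t ∈ Set.Icc 0 T, α t ≤ β t)
    (γ : ℝ → ℝ → ℝ)
    (hγ : ∀ t x, γ t x = if β t < x then β t else if x < α t then α t else x)
    (lstar : ℝ → ℝ → ℝ → ℝ)
    (hlstar : ∀ t x y, lstar t x y = h t - g (γ t x) - f (γ t x) * y + x - γ t x)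
    (u u' w' : ℝ → ℝ)
    (hu : IsC1On T u u')
    (hw : IsC1On T (fun t => phi (p t) (u' t)) w')
    (hbc : u 0 = u T) (hbc' : u' 0 = u' T)
    (heq : ∀ t ∈ Set.Icc 0 T, w' t = lstar t (u t) (u' t)) :
    ∀ t ∈ Set.Icc 0 T, α t ≤ u t ∧ u t ≤ β t := by
  obtain ⟨α', wα, hαC1, hαpos, hwα, hαper, hα'per, hαlower⟩ := hα
  obtain ⟨β', wβ, hβC1, hβpos, hwβ, hβper, hβ'per, hβupper⟩ := hβ
  have hfα : ContinuousOn (fun t => f (α t)) (Icc 0 T) :=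
    hf.comp hαC1.continuousOn_s10 fun t ht => (hαpos t ht).le
  have hfβ : ContinuousOn (fun t => f (β t)) (Icc 0 T) :=
    hf.comp hβC1.continuousOn_s10 fun t ht => (hβpos t ht).le
  have hαu := le_of_phi_comparison hT hp1 hαC1 hu hwα.1 hw.1 hαper hbc (by linarith) hfα
    fun t ht hlt => by
      have hγα : γ t (u t) = α t := by rw [hγ, if_neg (by linarith [hαβ t ht]), if_pos hlt]
      have := hαlower t ht
      rw [heq t ht, hlstar, hγα]
      linarith
  have huβ := le_of_phi_comparison hT hp1 hu hβC1 hw.1 hwβ.1 hbc hβper (by linarith) hfβ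
    fun t ht hlt => by
      have hγβ : γ t (u t) = β t := by rw [hγ, if_pos hlt]
      have := hβupper t ht
      rw [heq t ht, hlstar, hγβ]
      linarith
  exact fun t ht => ⟨hαu t ht, huβ t ht⟩

theorem stmt10 (T : ℝ) (hT : 0 < T) (p : ℝ → ℝ)
    (hp : ContinuousOn p (Set.Icc 0 T)) (hp1 : ∀ t ∈ Set.Icc 0 T, 1 < p t)
    (hpT : p 0 = p T)
    (f g h : ℝ → ℝ)
    (hf : ContinuousOn f (Set.Ici 0)) (hg : ContinuousOn g (Set.Ioi 0))
    (hh : ContinuousOn h (Set.Icc 0 T))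
    (α β : ℝ → ℝ) (hα : IsLowerSol T p f g h α) (hβ : IsUpperSol T p f g h β)
    (hαβ : ∀ t ∈ Set.Icc 0 T, α t ≤ β t)
    (γ : ℝ → ℝ → ℝ)
    (hγ : ∀ t x, γ t x = if β t < x then β t else if x < α t then α t else x)
    (lstar : ℝ → ℝ → ℝ → ℝ)
    (hlstar : ∀ t x y, lstar t x y = h t - g (γ t x) - f (γ t x) * y + x - γ t x)
    (u u' w' : ℝ → ℝ)
    (hu : IsC1On T u u')
    (hw : IsC1On T (fun t => phi (p t) (u' t)) w')
    (hbc : u 0 = u T) (hbc' : u' 0 = u' T)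
    (heq : ∀ t ∈ Set.Icc 0 T, w' t = lstar t (u t) (u' t)) :
    ∀ t ∈ Set.Icc 0 T, α t ≤ u t ∧ u t ≤ β t :=
  stmt10_general T hT p hp1 f g h hf α β hα hβ hαβ γ hγ lstar hlstar u u' w' hu hw hbc hbc' heq
end
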